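/- arXiv:1111.2664 — 2 statements merged into one kernel-verified Lean document; each statement's English description precedes it below -/
import Mathlib

section
/- Let C : ℝ^n → ℝ be convex, differentiable, and strictly convex, and suppose its convex conjugate C* is differentiable at every point of the image ∇C(ℝ^n) := {∇C(s) : s ∈ ℝ^n}. Let O be an outcome space and ρ : O → ℝ^n satisfy ρ(X) ∈ ∇C(ℝ^n) for all X ∈ O. Then for all s, s' ∈ ℝ^n and all X ∈ O, the ex-post profit of the trade (s ↦ s') in the automated prediction market maker with cost function C satisfies (s' − s)·ρ(X) − C(s') + C(s) = D_{C*}(ρ(X), ∇C(s)) − D_{C*}(ρ(X), ∇C(s')). In particular, the market implements the generalized scoring rule L(w;X) = D_{C*}(ρ(X), w) + f(X) on the hypothesis space ∇C(ℝ^n), via the surjection φ : s ↦ ∇C(s), for any f : O → ℝ. -/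
/-!
At the price `p = ∇C(s)` the supremum defining `C*(p)` is attained at `s`, so
`C*(p) = ⟪p, s⟫ - C(s)`; by Fenchel–Young, `y ↦ C*(y) - ⟪s, y⟫` is minimised at `p` over the
convex effective domain of `C*`, which contains every `∇C(u)`. Fermat's rule along the segment
`[p, ∇C(u)]` gives `⟪∇C*(p) - s, ∇C(u) - p⟫ ≥ 0`, and strict monotonicity of `∇C` at
`u = 2s - ∇C*(p)` makes this negative unless `∇C*(p) = s`. Hence
`D_{C*}(x, ∇C(s)) = C*(x) - ⟪x, s⟫ + C(s)`, and the profit identity is a rearrangement.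
-/

open scoped RealInnerProductSpace
open Set

section

variable {E : Type*} [NormedAddCommGroup E] [InnerProductSpace ℝ E]

/-- Off `fenchelConjugateDomain f` the supremum is unbounded and `⨆` returns the junk value
`0`. -/
noncomputable def fenchelConjugate (f : E → ℝ) (y : E) : ℝ := ⨆ x, ⟪y, x⟫ - f x

def fenchelConjugateDomain (f : E → ℝ) : Set E :=
  {y | BddAbove (range fun x => ⟪y, x⟫ - f x)}

theorem convex_fenchelConjugateDomain (f : E → ℝ) : Convex ℝ (fenchelConjugateDomain f) := by
  rintro y₁ ⟨M₁, hM₁⟩ y₂ ⟨M₂, hM₂⟩ a b ha hb hab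
  refine ⟨a * M₁ + b * M₂, ?_⟩
  rintro _ ⟨x, rfl⟩
  have h₁ : ⟪y₁, x⟫ - f x ≤ M₁ := hM₁ ⟨x, rfl⟩
  have h₂ : ⟪y₂, x⟫ - f x ≤ M₂ := hM₂ ⟨x, rfl⟩
  have hsplit :
      ⟪a • y₁ + b • y₂, x⟫ - f x = a * (⟪y₁, x⟫ - f x) + b * (⟪y₂, x⟫ - f x) := by
    rw [inner_add_left, real_inner_smul_left, real_inner_smul_left]
    linear_combination (f x) * hab
  dsimp only
  rw [hsplit]
  gcongr

theorem inner_sub_le_fenchelConjugate {f : E → ℝ} {y : E} (hy : y ∈ fenchelConjugateDomain f)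
    (x : E) : ⟪y, x⟫ - f x ≤ fenchelConjugate f y :=
  le_ciSup hy x

variable [CompleteSpace E]

theorem HasGradientAt.hasDerivAt_comp_lineMap {f : E → ℝ} {p x : E} (h : HasGradientAt f p x)
    (y : E) : HasDerivAt (f ∘ (AffineMap.lineMap x y : ℝ →ᵃ[ℝ] E)) ⟪p, y - x⟫ 0 := by
  have hf : HasFDerivAt f (InnerProductSpace.toDual ℝ E p) (AffineMap.lineMap x y (0 : ℝ)) := by
    simpa using h.hasFDerivAt
  simpa using hf.comp_hasDerivAt (0 : ℝ) AffineMap.hasDerivAt_lineMap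

namespace ConvexOn

variable {f : E → ℝ}

theorem add_inner_sub_le_of_hasGradientAt (hf : ConvexOn ℝ univ f) {p x : E}
    (h : HasGradientAt f p x) (y : E) : f x + ⟪p, y - x⟫ ≤ f y := by
  have hline : ConvexOn ℝ univ (f ∘ (AffineMap.lineMap x y : ℝ →ᵃ[ℝ] E)) := by
    simpa using hf.comp_affineMap (AffineMap.lineMap x y)
  have hslope := hline.le_slope_of_hasDerivAt (mem_univ 0) (mem_univ 1) zero_lt_one
    (h.hasDerivAt_comp_lineMap y)
  simp only [slope_def_field, Function.comp_apply, AffineMap.lineMap_apply_one,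
    AffineMap.lineMap_apply_zero, sub_zero, div_one] at hslope
  linarith

theorem mem_fenchelConjugateDomain_of_hasGradientAt (hf : ConvexOn ℝ univ f) {p x : E}
    (h : HasGradientAt f p x) : p ∈ fenchelConjugateDomain f := by
  refine ⟨⟪p, x⟫ - f x, ?_⟩
  rintro _ ⟨y, rfl⟩
  have := hf.add_inner_sub_le_of_hasGradientAt h y
  rw [inner_sub_right] at this
  linarith

theorem fenchelConjugate_eq_of_hasGradientAt (hf : ConvexOn ℝ univ f) {p x : E}
    (h : HasGradientAt f p x) : fenchelConjugate f p = ⟪p, x⟫ - f x := by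
  refine le_antisymm (ciSup_le fun y => ?_)
    (inner_sub_le_fenchelConjugate (hf.mem_fenchelConjugateDomain_of_hasGradientAt h) x)
  have := hf.add_inner_sub_le_of_hasGradientAt h y
  rw [inner_sub_right] at this
  linarith

theorem isMinOn_fenchelConjugate_sub_inner (hf : ConvexOn ℝ univ f) {p x : E}
    (h : HasGradientAt f p x) :
    IsMinOn (fun y => fenchelConjugate f y - ⟪x, y⟫) (fenchelConjugateDomain f) p := by
  intro y hy
  have hyoung := inner_sub_le_fenchelConjugate hy x
  show fenchelConjugate f p - ⟪x, p⟫ ≤ fenchelConjugate f y - ⟪x, y⟫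
  rw [hf.fenchelConjugate_eq_of_hasGradientAt h, real_inner_comm p x, real_inner_comm y x]
  linarith

theorem inner_gradient_fenchelConjugate_sub_nonneg (hf : ConvexOn ℝ univ f) {p q x y g : E}
    (hx : HasGradientAt f p x) (hy : HasGradientAt f q y)
    (hg : HasGradientAt (fenchelConjugate f) g p) : 0 ≤ ⟪g - x, q - p⟫ := by
  have hderiv : HasFDerivAt (fun z => fenchelConjugate f z - ⟪x, z⟫)
      (InnerProductSpace.toDual ℝ E g - innerSL ℝ x) p :=
    hg.hasFDerivAt.sub (innerSL ℝ x).hasFDerivAt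
  have hsegment : segment ℝ p q ⊆ fenchelConjugateDomain f :=
    (convex_fenchelConjugateDomain f).segment_subset
      (hf.mem_fenchelConjugateDomain_of_hasGradientAt hx)
      (hf.mem_fenchelConjugateDomain_of_hasGradientAt hy)
  have := (hf.isMinOn_fenchelConjugate_sub_inner hx).localize.hasFDerivWithinAt_nonneg
    hderiv.hasFDerivWithinAt (sub_mem_posTangentConeAt_of_segment_subset hsegment)
  simpa [inner_sub_left] using this

end ConvexOn

namespace StrictConvexOn

variable {f : E → ℝ}

theorem add_inner_sub_lt_of_hasGradientAt (hf : StrictConvexOn ℝ univ f) {p x y : E}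
    (h : HasGradientAt f p x) (hxy : y ≠ x) : f x + ⟪p, y - x⟫ < f y := by
  have hmid := hf.2 (mem_univ y) (mem_univ x) hxy one_half_pos one_half_pos (by norm_num)
  have hfirst :=
    hf.convexOn.add_inner_sub_le_of_hasGradientAt h ((1 / 2 : ℝ) • y + (1 / 2 : ℝ) • x)
  have hdir : ((1 / 2 : ℝ) • y + (1 / 2 : ℝ) • x) - x = (1 / 2 : ℝ) • (y - x) := by module
  rw [hdir, real_inner_smul_right] at hfirst
  simp only [smul_eq_mul] at hmid
  linarith

theorem inner_sub_pos_of_hasGradientAt (hf : StrictConvexOn ℝ univ f) {p q x y : E}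
    (hx : HasGradientAt f p x) (hy : HasGradientAt f q y) (hxy : x ≠ y) :
    0 < ⟪p - q, x - y⟫ := by
  have h₁ := hf.add_inner_sub_lt_of_hasGradientAt hx hxy.symm
  have h₂ := hf.add_inner_sub_lt_of_hasGradientAt hy hxy
  simp only [inner_sub_left, inner_sub_right] at h₁ h₂ ⊢
  linarith

theorem hasGradientAt_fenchelConjugate_eq (hf : StrictConvexOn ℝ univ f)
    (hdiff : Differentiable ℝ f) {p x g : E} (hx : HasGradientAt f p x)
    (hg : HasGradientAt (fenchelConjugate f) g p) : g = x := by
  by_contra hne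
  set y := x - (g - x)
  have hyx : y ≠ x := by simpa [y, sub_eq_zero] using hne
  have hy := (hdiff y).hasGradientAt
  have hnonneg := hf.convexOn.inner_gradient_fenchelConjugate_sub_nonneg hx hy hg
  have hpos := hf.inner_sub_pos_of_hasGradientAt hy hx hyx
  rw [show y - x = -(g - x) by simp [y], inner_neg_right, real_inner_comm] at hpos
  linarith

end StrictConvexOn

end

theorem apmm_profit_eq_bregman_difference_general
    {n : ℕ} {O : Type*}
    (C : EuclideanSpace ℝ (Fin n) → ℝ)
    (hCstrict : StrictConvexOn ℝ Set.univ C)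
    (gradC : EuclideanSpace ℝ (Fin n) → EuclideanSpace ℝ (Fin n))
    (hgradC : ∀ x, HasGradientAt C (gradC x) x)
    (Cstar : EuclideanSpace ℝ (Fin n) → ℝ)
    (hCstarDef : ∀ y, Cstar y = ⨆ x : EuclideanSpace ℝ (Fin n), (⟪y, x⟫ - C x))
    (gradCstar : EuclideanSpace ℝ (Fin n) → EuclideanSpace ℝ (Fin n))
    (hgradCstar : ∀ p ∈ Set.range gradC, HasGradientAt Cstar (gradCstar p) p)
    (ρ : O → EuclideanSpace ℝ (Fin n))
    (D : EuclideanSpace ℝ (Fin n) → EuclideanSpace ℝ (Fin n) → ℝ)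
    (hD : ∀ x y, D x y = Cstar x - Cstar y - ⟪gradCstar y, x - y⟫) :
    (∀ (s s' : EuclideanSpace ℝ (Fin n)) (X : O),
        ⟪s' - s, ρ X⟫ - C s' + C s = D (ρ X) (gradC s) - D (ρ X) (gradC s'))
    ∧ ∀ (f : O → ℝ) (L : EuclideanSpace ℝ (Fin n) → O → ℝ),
        (∀ w X, L w X = D (ρ X) w + f X) →
        Function.Surjective (fun s : EuclideanSpace ℝ (Fin n) =>
          (⟨gradC s, Set.mem_range_self s⟩ : Set.range gradC)) ∧
        ∀ (s s' : EuclideanSpace ℝ (Fin n)) (X : O),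
          ⟪s' - s, ρ X⟫ - C s' + C s = L (gradC s) X - L (gradC s') X := by
  obtain rfl : Cstar = fenchelConjugate C := funext hCstarDef
  have gradCstar_gradC (s) : gradCstar (gradC s) = s :=
    hCstrict.hasGradientAt_fenchelConjugate_eq (fun x => (hgradC x).differentiableAt)
      (hgradC s) (hgradCstar _ ⟨s, rfl⟩)
  have bregman_at_price (x s) : D x (gradC s) = fenchelConjugate C x - ⟪s, x⟫ + C s := by
    rw [hD, hCstrict.convexOn.fenchelConjugate_eq_of_hasGradientAt (hgradC s), gradCstar_gradC,
      inner_sub_right, real_inner_comm s]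
    ring
  have profit (s s' : EuclideanSpace ℝ (Fin n)) (X : O) :
      ⟪s' - s, ρ X⟫ - C s' + C s = D (ρ X) (gradC s) - D (ρ X) (gradC s') := by
    rw [bregman_at_price, bregman_at_price, inner_sub_left]
    ring
  refine ⟨profit, fun f L hL => ⟨?_, fun s s' X => by rw [hL, hL, profit]; ring⟩⟩
  rintro ⟨_, s, rfl⟩
  exact ⟨s, rfl⟩

/-- In an automated prediction market maker with cost function `C`,
the ex-post profit of a trade `(s ↦ s')` equals the decrease in the Bregman divergence
`D_{C*}(ρ(X), ·)` evaluated at the instantaneous prices `∇C(s)` and `∇C(s')`; in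
particular the market implements the generalized scoring rule
`L(w;X) = D_{C*}(ρ(X), w) + f(X)` via `φ : s ↦ ∇C(s)`, for any `f`. -/
theorem apmm_profit_eq_bregman_difference
    {n : ℕ} {O : Type*}
    (C : EuclideanSpace ℝ (Fin n) → ℝ)
    (hCconv : ConvexOn ℝ Set.univ C)
    (hCstrict : StrictConvexOn ℝ Set.univ C)
    (gradC : EuclideanSpace ℝ (Fin n) → EuclideanSpace ℝ (Fin n))
    (hgradC : ∀ x, HasGradientAt C (gradC x) x)
    (Cstar : EuclideanSpace ℝ (Fin n) → ℝ)
    (hCstarDef : ∀ y, Cstar y = ⨆ x : EuclideanSpace ℝ (Fin n), (⟪y, x⟫ - C x))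
    (gradCstar : EuclideanSpace ℝ (Fin n) → EuclideanSpace ℝ (Fin n))
    (hgradCstar : ∀ p ∈ Set.range gradC, HasGradientAt Cstar (gradCstar p) p)
    (ρ : O → EuclideanSpace ℝ (Fin n)) (hρ : ∀ X, ρ X ∈ Set.range gradC)
    (D : EuclideanSpace ℝ (Fin n) → EuclideanSpace ℝ (Fin n) → ℝ)
    (hD : ∀ x y, D x y = Cstar x - Cstar y - ⟪gradCstar y, x - y⟫) :
    (∀ (s s' : EuclideanSpace ℝ (Fin n)) (X : O),
        ⟪s' - s, ρ X⟫ - C s' + C s = D (ρ X) (gradC s) - D (ρ X) (gradC s'))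
    ∧ ∀ (f : O → ℝ) (L : EuclideanSpace ℝ (Fin n) → O → ℝ),
        (∀ w X, L w X = D (ρ X) w + f X) →
        Function.Surjective (fun s : EuclideanSpace ℝ (Fin n) =>
          (⟨gradC s, Set.mem_range_self s⟩ : Set.range gradC)) ∧
        ∀ (s s' : EuclideanSpace ℝ (Fin n)) (X : O),
          ⟪s' - s, ρ X⟫ - C s' + C s = L (gradC s) X - L (gradC s') X :=
  apmm_profit_eq_bregman_difference_general C hCstrict gradC hgradC Cstar hCstarDef gradCstar
    hgradCstar ρ D hD
end

section
/- Let C : ℝ^n → ℝ be convex, differentiable, and strictly convex, with convex conjugate C* differentiable at every point of ∇C(ℝ^n). Let P be a probability distribution on an outcome space O and let ρ : O → ℝ^n be P-integrable with ρ(X) ∈ ∇C(ℝ^n) for all X and with μ := E_{X∼P}[ρ(X)] ∈ ∇C(ℝ^n), and suppose C* is differentiable at μ. Then for all s, s' ∈ ℝ^n, the expected ex-post profit of the trade (s ↦ s') satisfies E_{X∼P}[(s' − s)·ρ(X) − C(s') + C(s)] = D_{C*}(μ, ∇C(s)) − D_{C*}(μ, ∇C(s')). -/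
/-!
Taking expectations, the profit of the trade is `⟪s' - s, μ⟫ - C s' + C s`. At a point
`∇C t` the Fenchel–Young inequality is an equality, `C* (∇C t) = ⟪∇C t, t⟫ - C t`, and strict
convexity forces `∇C* (∇C t) = t`; hence `D_{C*}(μ, ∇C t) = C* μ + C t - ⟪t, μ⟫`, and the
difference of two such divergences is the expected profit.
-/

open MeasureTheory
open scoped RealInnerProductSpace

section Gradient

variable {E : Type*} [NormedAddCommGroup E] [InnerProductSpace ℝ E] [CompleteSpace E]
  {f : E → ℝ} {x y g : E}

theorem ConvexOn.inner_gradient_le_sub (hf : ConvexOn ℝ Set.univ f) (hg : HasGradientAt f g x)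
    (y : E) : ⟪g, y - x⟫ ≤ f y - f x := by
  let L : ℝ →ᵃ[ℝ] E := AffineMap.lineMap x y
  have hline : ConvexOn ℝ Set.univ (f ∘ L) := hf.comp_affineMap L
  have hderiv : HasDerivAt (f ∘ L) ⟪g, y - x⟫ 0 := by
    have hg' : HasFDerivAt f (InnerProductSpace.toDual ℝ E g) (L 0) := by
      simpa [L] using hg.hasFDerivAt
    simpa using hg'.comp_hasDerivAt (0 : ℝ) AffineMap.hasDerivAt_lineMap
  simpa [slope, L] using
    hline.le_slope_of_hasDerivAt (Set.mem_univ 0) (Set.mem_univ 1) one_pos hderiv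

theorem StrictConvexOn.inner_gradient_lt_sub (hf : StrictConvexOn ℝ Set.univ f)
    (hg : HasGradientAt f g x) (hxy : y ≠ x) : ⟪g, y - x⟫ < f y - f x := by
  set m : E := (2⁻¹ : ℝ) • y + (2⁻¹ : ℝ) • x
  have hm : m - x = (2⁻¹ : ℝ) • (y - x) := by module
  have hgm : ⟪g, m - x⟫ ≤ f m - f x := hf.convexOn.inner_gradient_le_sub hg m
  have hmid : f m < 2⁻¹ * f y + 2⁻¹ * f x :=
    hf.2 (Set.mem_univ y) (Set.mem_univ x) hxy (by norm_num) (by norm_num) (by norm_num)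
  rw [hm, real_inner_smul_right] at hgm
  linarith

theorem StrictConvexOn.inner_sub_gradient_pos (hf : StrictConvexOn ℝ Set.univ f) {gx gy : E}
    (hx : HasGradientAt f gx x) (hy : HasGradientAt f gy y) (hxy : x ≠ y) :
    0 < ⟪x - y, gx - gy⟫ := by
  have h₁ := hf.inner_gradient_lt_sub hy hxy
  have h₂ := hf.convexOn.inner_gradient_le_sub hx y
  rw [← neg_sub x y, inner_neg_right] at h₂
  rw [inner_sub_right, real_inner_comm, real_inner_comm gy]
  linarith

end Gradient

section Conjugate

variable {E : Type*} [NormedAddCommGroup E] [InnerProductSpace ℝ E]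

/-- Off the effective domain, where the supremum is unbounded, `⨆` returns the junk value `0`. -/
noncomputable def convexConjugate (f : E → ℝ) (y : E) : ℝ := ⨆ x, ⟪y, x⟫ - f x

theorem convex_setOf_bddAbove_range_inner_sub (f : E → ℝ) :
    Convex ℝ {y : E | BddAbove (Set.range fun x => ⟪y, x⟫ - f x)} := by
  rintro y₁ ⟨M₁, hM₁⟩ y₂ ⟨M₂, hM₂⟩ a b ha hb hab
  refine ⟨a * M₁ + b * M₂, ?_⟩
  rintro _ ⟨x, rfl⟩
  have h₁ : a * (⟪y₁, x⟫ - f x) ≤ a * M₁ := mul_le_mul_of_nonneg_left (hM₁ ⟨x, rfl⟩) ha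
  have h₂ : b * (⟪y₂, x⟫ - f x) ≤ b * M₂ := mul_le_mul_of_nonneg_left (hM₂ ⟨x, rfl⟩) hb
  have hfx : a * f x + b * f x = f x := by rw [← add_mul, hab, one_mul]
  simp only [inner_add_left, real_inner_smul_left]
  linarith

variable [CompleteSpace E] {f : E → ℝ} {x g : E}

theorem ConvexOn.inner_sub_le_of_hasGradientAt (hf : ConvexOn ℝ Set.univ f)
    (hg : HasGradientAt f g x) (z : E) : ⟪g, z⟫ - f z ≤ ⟪g, x⟫ - f x := by
  have := hf.inner_gradient_le_sub hg z
  rw [inner_sub_right] at this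
  linarith

theorem ConvexOn.bddAbove_range_inner_sub_of_hasGradientAt (hf : ConvexOn ℝ Set.univ f)
    (hg : HasGradientAt f g x) : BddAbove (Set.range fun z => ⟪g, z⟫ - f z) :=
  ⟨_, Set.forall_mem_range.2 (hf.inner_sub_le_of_hasGradientAt hg)⟩

theorem ConvexOn.convexConjugate_eq_of_hasGradientAt (hf : ConvexOn ℝ Set.univ f)
    (hg : HasGradientAt f g x) : convexConjugate f g = ⟪g, x⟫ - f x :=
  le_antisymm (ciSup_le (hf.inner_sub_le_of_hasGradientAt hg))
    (le_ciSup (hf.bddAbove_range_inner_sub_of_hasGradientAt hg) x)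

theorem StrictConvexOn.eq_of_hasGradientAt_convexConjugate (hf : StrictConvexOn ℝ Set.univ f)
    {f' : E → E} (hf' : ∀ y, HasGradientAt f (f' y) y) {g' : E}
    (hstar : HasGradientAt (convexConjugate f) g' (f' x)) : g' = x := by
  by_contra hne
  set u := g' - x
  set z := f' (x - u)
  -- `w ↦ f* w - ⟪x, w⟫` is minimal at `f' x` on the segment towards `z`, which lies in the
  -- effective domain of `f*`; so its derivative `⟪u, ·⟫` is nonnegative in the direction
  -- `z - f' x`, whereas strict monotonicity of `f'` makes it negative.
  have hdom : segment ℝ (f' x) z ⊆ {y | BddAbove (Set.range fun v => ⟪y, v⟫ - f v)} :=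
    (convex_setOf_bddAbove_range_inner_sub f).segment_subset
      (hf.convexOn.bddAbove_range_inner_sub_of_hasGradientAt (hf' x))
      (hf.convexOn.bddAbove_range_inner_sub_of_hasGradientAt (hf' _))
  have hmin : IsMinOn (fun w => convexConjugate f w - ⟪x, w⟫) (segment ℝ (f' x) z) (f' x) := by
    intro w hw
    have hle : ⟪w, x⟫ - f x ≤ convexConjugate f w := le_ciSup (hdom hw) x
    rw [real_inner_comm] at hle
    show convexConjugate f (f' x) - ⟪x, f' x⟫ ≤ convexConjugate f w - ⟪x, w⟫
    rw [hf.convexOn.convexConjugate_eq_of_hasGradientAt (hf' x), real_inner_comm]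
    linarith
  have hderiv := (hstar.hasFDerivAt.sub (innerSL ℝ x).hasFDerivAt).hasFDerivWithinAt
    (s := segment ℝ (f' x) z)
  have hnonneg := hmin.localize.hasFDerivWithinAt_nonneg hderiv
    (sub_mem_posTangentConeAt_of_segment_subset subset_rfl)
  have hpos := hf.inner_sub_gradient_pos (hf' (x - u)) (hf' x)
    (by simpa [u, sub_eq_zero] using hne)
  simp only [sub_apply, InnerProductSpace.toDual_apply_apply,
    innerSL_apply_apply, ← inner_sub_left] at hnonneg
  rw [sub_sub_cancel_left, inner_neg_left] at hpos
  linarith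

end Conjugate

theorem integral_inner_add_const {E Ω : Type*} [NormedAddCommGroup E] [InnerProductSpace ℝ E]
    [CompleteSpace E] [MeasurableSpace Ω] {P : Measure Ω} [IsProbabilityMeasure P] {ρ : Ω → E}
    (hρ : Integrable ρ P) (v : E) (c : ℝ) :
    ∫ ω, (⟪v, ρ ω⟫ + c) ∂P = ⟪v, ∫ ω, ρ ω ∂P⟫ + c := by
  rw [integral_add (hρ.const_inner v) (integrable_const c), integral_inner hρ, integral_const,
    probReal_univ, one_smul]

theorem apmm_expected_profit_eq_bregman_difference_of_mean_general
    {n : ℕ} {O : Type*} [MeasurableSpace O]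
    (C : EuclideanSpace ℝ (Fin n) → ℝ)
    (hCstrict : StrictConvexOn ℝ Set.univ C)
    (gradC : EuclideanSpace ℝ (Fin n) → EuclideanSpace ℝ (Fin n))
    (hgradC : ∀ x, HasGradientAt C (gradC x) x)
    (Cstar : EuclideanSpace ℝ (Fin n) → ℝ)
    (hCstarDef : ∀ y, Cstar y = ⨆ x : EuclideanSpace ℝ (Fin n), (⟪y, x⟫ - C x))
    (gradCstar : EuclideanSpace ℝ (Fin n) → EuclideanSpace ℝ (Fin n))
    (hgradCstar : ∀ p ∈ Set.range gradC, HasGradientAt Cstar (gradCstar p) p)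
    (P : Measure O) [IsProbabilityMeasure P]
    (ρ : O → EuclideanSpace ℝ (Fin n))
    (hρint : Integrable ρ P)
    (μ : EuclideanSpace ℝ (Fin n)) (hμ : μ = ∫ X, ρ X ∂P)
    (D : EuclideanSpace ℝ (Fin n) → EuclideanSpace ℝ (Fin n) → ℝ)
    (hD : ∀ x y, D x y = Cstar x - Cstar y - ⟪gradCstar y, x - y⟫) :
    ∀ s s' : EuclideanSpace ℝ (Fin n),
      ∫ X, (⟪s' - s, ρ X⟫ - C s' + C s) ∂P
        = D μ (gradC s) - D μ (gradC s') := by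
  intro s s'
  have hCstar : Cstar = convexConjugate C := funext hCstarDef
  subst hCstar
  have hdiv : ∀ t, D μ (gradC t) = convexConjugate C μ + C t - ⟪t, μ⟫ := fun t => by
    rw [hD, hCstrict.convexOn.convexConjugate_eq_of_hasGradientAt (hgradC t),
      hCstrict.eq_of_hasGradientAt_convexConjugate hgradC (hgradCstar _ ⟨t, rfl⟩),
      inner_sub_right, real_inner_comm]
    ring
  simp_rw [sub_add_eq_add_sub, add_sub_assoc]
  rw [integral_inner_add_const hρint, ← hμ, hdiv, hdiv, inner_sub_left]
  ring

/-- In an automated prediction market maker with cost function `C`,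
the expected ex-post profit of a trade `(s ↦ s')` under belief `P` equals
`D_{C*}(μ, ∇C(s)) − D_{C*}(μ, ∇C(s'))`, where `μ = E_{X∼P}[ρ(X)]`. -/
theorem apmm_expected_profit_eq_bregman_difference_of_mean
    {n : ℕ} {O : Type*} [MeasurableSpace O]
    (C : EuclideanSpace ℝ (Fin n) → ℝ)
    (hCconv : ConvexOn ℝ Set.univ C)
    (hCstrict : StrictConvexOn ℝ Set.univ C)
    (gradC : EuclideanSpace ℝ (Fin n) → EuclideanSpace ℝ (Fin n))
    (hgradC : ∀ x, HasGradientAt C (gradC x) x)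
    (Cstar : EuclideanSpace ℝ (Fin n) → ℝ)
    (hCstarDef : ∀ y, Cstar y = ⨆ x : EuclideanSpace ℝ (Fin n), (⟪y, x⟫ - C x))
    (gradCstar : EuclideanSpace ℝ (Fin n) → EuclideanSpace ℝ (Fin n))
    (hgradCstar : ∀ p ∈ Set.range gradC, HasGradientAt Cstar (gradCstar p) p)
    (P : Measure O) [IsProbabilityMeasure P]
    (ρ : O → EuclideanSpace ℝ (Fin n))
    (hρint : Integrable ρ P) (hρmem : ∀ X, ρ X ∈ Set.range gradC)
    (μ : EuclideanSpace ℝ (Fin n)) (hμ : μ = ∫ X, ρ X ∂P)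
    (hμmem : μ ∈ Set.range gradC)
    (hμdiff : HasGradientAt Cstar (gradCstar μ) μ)
    (D : EuclideanSpace ℝ (Fin n) → EuclideanSpace ℝ (Fin n) → ℝ)
    (hD : ∀ x y, D x y = Cstar x - Cstar y - ⟪gradCstar y, x - y⟫) :
    ∀ s s' : EuclideanSpace ℝ (Fin n),
      ∫ X, (⟪s' - s, ρ X⟫ - C s' + C s) ∂P
        = D μ (gradC s) - D μ (gradC s') :=
  apmm_expected_profit_eq_bregman_difference_of_mean_general C hCstrict gradC hgradC Cstar hCstarDef
    gradCstar hgradCstar P ρ hρint μ hμ D hD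
end
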